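/- arXiv:2211.04648 — 3 statements merged into one kernel-verified Lean document; each statement's English description precedes it below -/
import Mathlib

section
/- Let m ≥ 2 and let α be a finite type equipped with a multiplicative action of the symmetric group Equiv.Perm (Fin m). Suppose every element a of α is fixed by some transposition, i.e., for every a there exist i ≠ j in Fin m with (Equiv.swap i j) • a = a. Then ∑_{σ ∈ Equiv.Perm (Fin m)} sign(σ) · (number of fixed points of σ acting on α) = 0, where sign(σ) ∈ {±1} is the sign of the permutation (viewed in ℤ). In particular, the multiplicity of the sign representation in the permutation representation of Equiv.Perm (Fin m) on functions α → ℂ is zero. (This is the signed Burnside-type argument in the proof of the paper's Theorem 3.7.) -/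
open Finset

/-- The signed Burnside-type argument of Theorem 3.7: if every element of a finite
`Equiv.Perm (Fin m)`-set is fixed by some transposition, then the signed count of fixed
points vanishes (so the sign representation does not occur in the permutation
representation). -/
theorem signed_burnside (m : ℕ) (hm : 2 ≤ m) (α : Type*) [Fintype α] [DecidableEq α]
    [MulAction (Equiv.Perm (Fin m)) α]
    (h : ∀ a : α, ∃ i j : Fin m, i ≠ j ∧ (Equiv.swap i j) • a = a) :
    ∑ σ : Equiv.Perm (Fin m),
      (Equiv.Perm.sign σ : ℤ) * (Fintype.card {a : α // σ • a = a} : ℤ) = 0 := by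
  have hcard : ∀ σ : Equiv.Perm (Fin m),
      (Fintype.card {a : α // σ • a = a} : ℤ) = ∑ a : α, if σ • a = a then (1 : ℤ) else 0 := by
    intro σ
    rw [Fintype.card_subtype, Finset.card_filter]
    push_cast
    rfl
  calc ∑ σ : Equiv.Perm (Fin m),
        (Equiv.Perm.sign σ : ℤ) * (Fintype.card {a : α // σ • a = a} : ℤ)
      = ∑ σ : Equiv.Perm (Fin m), ∑ a : α,
          (if σ • a = a then (Equiv.Perm.sign σ : ℤ) else 0) := by
        refine Finset.sum_congr rfl fun σ _ => ?_
        rw [hcard σ, Finset.mul_sum]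
        exact Finset.sum_congr rfl fun a _ => by split <;> simp
    _ = ∑ a : α, ∑ σ : Equiv.Perm (Fin m),
          (if σ • a = a then (Equiv.Perm.sign σ : ℤ) else 0) := Finset.sum_comm
    _ = 0 := by
        refine Finset.sum_eq_zero fun a _ => ?_
        obtain ⟨i, j, hij, hfix⟩ := h a
        rw [← Finset.sum_filter]
        set S := Finset.univ.filter (fun σ : Equiv.Perm (Fin m) => σ • a = a) with hS
        set τ := Equiv.swap i j with hτ
        have hτS : ∀ σ : Equiv.Perm (Fin m), σ ∈ S ↔ τ * σ ∈ S := by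
          intro σ
          simp only [hS, Finset.mem_filter, Finset.mem_univ, true_and, mul_smul]
          constructor
          · intro hs; rw [hs]; exact hfix
          · intro hs
            have h2 := congrArg (fun x => τ • x) hs
            rw [hfix, smul_smul, hτ, Equiv.swap_mul_self, one_smul] at h2
            exact h2
        have key : ∑ σ ∈ S, (Equiv.Perm.sign σ : ℤ)
            = ∑ σ ∈ S, (Equiv.Perm.sign (τ * σ) : ℤ) := by
          refine Finset.sum_equiv (Equiv.mulLeft τ) (fun σ => by simpa using hτS σ) (fun σ _ => by simp [hτ, Equiv.Perm.sign_swap hij])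
        have hsign : ∀ σ : Equiv.Perm (Fin m),
            (Equiv.Perm.sign (τ * σ) : ℤ) = -(Equiv.Perm.sign σ : ℤ) := by
          intro σ
          rw [map_mul]
          simp [hτ, Equiv.Perm.sign_swap hij]
        rw [Finset.sum_congr rfl (fun σ _ => hsign σ), Finset.sum_neg_distrib] at key
        linarith
end

section
/- Let m ≥ 2 and D be natural numbers, and let S be the (finite) set of functions k : Fin m → ℕ with 1 ≤ k(i) ≤ m−1 for all i and ∑_{i} k(i) = D. Then ∑_{σ ∈ Equiv.Perm (Fin m)} sign(σ) · #{k ∈ S : k ∘ σ = k} = 0 in ℤ. (This signed fixed-point count computes the multiplicity of the sign character in the permutation character of the symmetric group on the exponent tuples appearing in the proof of the paper's Theorem 3.7, and its vanishing is what forces that multiplicity to be zero.) -/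
open Finset

/-- The signed fixed-point count of exponent tuples in the proof of Theorem 3.7:
`∑_σ sign(σ) · #{k : 1 ≤ kᵢ ≤ m-1, ∑ kᵢ = D, k ∘ σ = k} = 0`. -/
theorem signed_fixed_point_count (m D : ℕ) (hm : 2 ≤ m) :
    ∑ σ : Equiv.Perm (Fin m),
      (Equiv.Perm.sign σ : ℤ) *
        ((((Fintype.piFinset (fun _ : Fin m => Finset.Icc 1 (m - 1))).filter
          (fun k : Fin m → ℕ => ∑ i, k i = D ∧ k ∘ σ = k)).card : ℤ)) = 0 := by
  classical
  set T := Fintype.piFinset (fun _ : Fin m => Finset.Icc 1 (m - 1)) with hT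
  have h1 : ∀ σ : Equiv.Perm (Fin m),
      (Equiv.Perm.sign σ : ℤ) *
        ((T.filter (fun k : Fin m → ℕ => ∑ i, k i = D ∧ k ∘ σ = k)).card : ℤ)
      = ∑ k ∈ T, if (∑ i, k i = D ∧ k ∘ σ = k) then (Equiv.Perm.sign σ : ℤ) else 0 := by
    intro σ
    rw [Finset.card_filter]
    push_cast
    rw [Finset.mul_sum]
    simp [mul_ite]
  rw [Finset.sum_congr rfl (fun σ _ => h1 σ), Finset.sum_comm]
  apply Finset.sum_eq_zero
  intro k hk
  have hmaps : ∀ x ∈ (Finset.univ : Finset (Fin m)), k x ∈ Finset.Icc 1 (m - 1) := by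
    intro x _
    exact (Fintype.mem_piFinset.mp hk) x
  have hlt : (Finset.Icc 1 (m - 1)).card < (Finset.univ : Finset (Fin m)).card := by
    simp [Nat.card_Icc]
    omega
  obtain ⟨i, _, j, _, hij, hkij⟩ :=
    Finset.exists_ne_map_eq_of_card_lt_of_maps_to hlt hmaps
  set τ := Equiv.swap i j with hτ
  have hkτ : ∀ y, k (τ y) = k y := by
    intro y
    rcases eq_or_ne y i with rfl | hyi
    · simpa [hτ, Equiv.swap_apply_left] using hkij.symm
    rcases eq_or_ne y j with rfl | hyj
    · simpa [hτ, Equiv.swap_apply_right] using hkij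
    · rw [hτ, Equiv.swap_apply_of_ne_of_ne hyi hyj]
  have hkey : ∀ σ : Equiv.Perm (Fin m), k ∘ (τ * σ) = k ∘ σ := by
    intro σ
    funext x
    simp [Function.comp, Equiv.Perm.mul_apply, hkτ]
  refine Finset.sum_involution (fun σ _ => τ * σ) ?_ ?_ (fun σ _ => Finset.mem_univ _) ?_
  · intro σ _
    by_cases h : ∑ i, k i = D ∧ k ∘ σ = k
    · have h2 : ∑ i, k i = D ∧ k ∘ (τ * σ) = k := ⟨h.1, by rw [hkey]; exact h.2⟩
      rw [if_pos h, if_pos h2, Equiv.Perm.sign_mul, hτ, Equiv.Perm.sign_swap hij]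
      push_cast
      ring
    · have h2 : ¬(∑ i, k i = D ∧ k ∘ (τ * σ) = k) := by
        rintro ⟨hD, hfix⟩
        exact h ⟨hD, by rw [← hkey]; exact hfix⟩
      rw [if_neg h, if_neg h2, add_zero]
  · intro σ _ hne hcontra
    have h1 : τ = 1 := mul_eq_right.mp hcontra
    exact hij (by simpa [hτ] using h1)
  · intro σ _
    simp [hτ, ← mul_assoc, Equiv.swap_mul_self]
end

section
/- Let m ≥ 2 be an integer. Then in AddMonoidAlgebra ℤ (ℚ × (ℚ/ℤ)) one has Γ̃_m(1/m) * Γ̃_m(0) = ∑_{j=1}^{m−1} [ ( 1 , π(j/m) ) ] + ∑_{j=1}^{m−1} ∑_{k=1, k≠j}^{m−1} [ ( (k+m−j)/m , π(j/m) ) ]. (This is the eigenspectrum ∑_{j=1}^{m−1}(1, j/m) + ∑_{k≠j}((k+m−j)/m, j/m) of the singularity y^m + x^m = 0 with the automorphism y ↦ ζ_m·y, computed in the proof of the paper's Proposition 4.5 describing limiting mixed Hodge structures along type (B) Hassett boundary strata.) -/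
open Finset

/-- The quotient group `ℚ/ℤ`. -/
abbrev QmodZ : Type := ℚ ⧸ AddSubgroup.zmultiples (1 : ℚ)

/-- The quotient map `π : ℚ → ℚ/ℤ`. -/
noncomputable def piQZ : ℚ →+ QmodZ := QuotientAddGroup.mk' (AddSubgroup.zmultiples (1 : ℚ))

/-- `Γ̃_m(r) := ∑_{j=1}^{m-1} [((m-j)/m, π(j·r))]` in the group ring `ℤ[ℚ × ℚ/ℤ]`. -/
noncomputable def GammaT (m : ℕ) (r : ℚ) : AddMonoidAlgebra ℤ (ℚ × QmodZ) :=
  ∑ j ∈ Finset.Icc 1 (m - 1),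
    AddMonoidAlgebra.single (((m : ℚ) - (j : ℚ)) / (m : ℚ), piQZ ((j : ℚ) * r)) (1 : ℤ)

/-- The eigenspectrum `∑_{j=1}^{m-1} (1, j/m) + ∑_{j} ∑_{k ≠ j} ((k+m-j)/m, j/m)` of the
singularity `y^m + x^m = 0` with automorphism `y ↦ ζ_m·y`, from the proof of
Proposition 4.5 (type (B) strata). -/
theorem typeB_eigenspectrum (m : ℕ) (hm : 2 ≤ m) :
    GammaT m (1 / (m : ℚ)) * GammaT m 0
      = (∑ j ∈ Finset.Icc 1 (m - 1),
          AddMonoidAlgebra.single ((1 : ℚ), piQZ ((j : ℚ) / (m : ℚ))) (1 : ℤ))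
        + ∑ j ∈ Finset.Icc 1 (m - 1), ∑ k ∈ (Finset.Icc 1 (m - 1)).erase j,
            AddMonoidAlgebra.single
              (((k : ℚ) + (m : ℚ) - (j : ℚ)) / (m : ℚ), piQZ ((j : ℚ) / (m : ℚ))) (1 : ℤ) := by
  have hm0 : (m : ℚ) ≠ 0 := by
    have : 0 < m := by omega
    exact_mod_cast this.ne'
  rw [GammaT, GammaT, Finset.sum_mul_sum, ← Finset.sum_add_distrib]
  refine Finset.sum_congr rfl fun j hj => ?_
  rw [Finset.mem_Icc] at hj
  have hjm : j ≤ m := by omega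
  -- simplify each product term
  have key : ∀ k ∈ Finset.Icc 1 (m - 1),
      AddMonoidAlgebra.single (((m : ℚ) - (j : ℚ)) / (m : ℚ),
        piQZ ((j : ℚ) * (1 / (m : ℚ)))) (1 : ℤ)
      * AddMonoidAlgebra.single (((m : ℚ) - (k : ℚ)) / (m : ℚ), piQZ ((k : ℚ) * 0)) (1 : ℤ)
      = AddMonoidAlgebra.single
          ((((m - k : ℕ) : ℚ) + (m : ℚ) - (j : ℚ)) / (m : ℚ), piQZ ((j : ℚ) / (m : ℚ))) (1 : ℤ) := by
    intro k hk
    rw [Finset.mem_Icc] at hk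
    have hkm : k ≤ m := by omega
    have h1 : ((m : ℚ) - j) / m + ((m : ℚ) - k) / m
        = (((m - k : ℕ) : ℚ) + (m : ℚ) - (j : ℚ)) / (m : ℚ) := by
      have : ((m - k : ℕ) : ℚ) = (m : ℚ) - k := by push_cast [hkm]; ring
      rw [this]
      field_simp
      ring
    have h2 : piQZ ((j : ℚ) * (1 / m)) + piQZ ((k : ℚ) * 0) = piQZ ((j : ℚ) / m) := by
      rw [mul_zero, map_zero, add_zero, mul_one_div]
    rw [AddMonoidAlgebra.single_mul_single, Prod.mk_add_mk, h1, h2, one_mul]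
  rw [Finset.sum_congr rfl key]
  -- reindex k ↦ m - k
  have hreidx : ∑ k ∈ Finset.Icc 1 (m - 1),
      AddMonoidAlgebra.single
        ((((m - k : ℕ) : ℚ) + (m : ℚ) - (j : ℚ)) / (m : ℚ), piQZ ((j : ℚ) / (m : ℚ))) (1 : ℤ)
      = ∑ k ∈ Finset.Icc 1 (m - 1),
      AddMonoidAlgebra.single
        (((k : ℚ) + (m : ℚ) - (j : ℚ)) / (m : ℚ), piQZ ((j : ℚ) / (m : ℚ))) (1 : ℤ) := by
    refine Finset.sum_nbij' (fun k => m - k) (fun k => m - k) ?_ ?_ ?_ ?_ ?_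
    · intro a ha; simp only [Finset.mem_Icc] at ha ⊢; omega
    · intro a ha; simp only [Finset.mem_Icc] at ha ⊢; omega
    · intro a ha; simp only [Finset.mem_Icc] at ha; show m - (m - a) = a; omega
    · intro a ha; simp only [Finset.mem_Icc] at ha; show m - (m - a) = a; omega
    · intro a ha; rfl
  rw [hreidx]
  have hjmem : j ∈ Finset.Icc 1 (m - 1) := Finset.mem_Icc.mpr hj
  rw [← Finset.add_sum_erase _ _ hjmem]
  congr 2
  have : ((j : ℚ) + m - j) / m = 1 := by field_simp; ring
  rw [this]
end
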